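/- arXiv:2001.10136 — 5 statements merged into one kernel-verified Lean document; each statement's English description precedes it below -/
import Mathlib

section
/- The map τ : Y → X defined by the condition ⟨τ(y), x⟩_A = φ(⟨y, x⟩_C) for all x ∈ X, y ∈ Y is the unique linear map from Y to X satisfying this condition. -/
/-- A pair `(X, Y)` implementing a strong Morita equivalence of unital inclusions
`A ⊆ C` and `B ⊆ D` of unital C*-algebras: `Y` is a `C`–`D`-equivalence bimodule and
`X` is a closed subspace of `Y` which is an `A`–`B`-equivalence bimodule with the
restricted actions and inner products. -/
structure MoritaPair
    (A : Type*) [NormedRing A] [StarRing A] [CStarRing A] [NormedAlgebra ℂ A]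
      [CompleteSpace A] [StarModule ℂ A]
    (C : Type*) [NormedRing C] [StarRing C] [CStarRing C] [NormedAlgebra ℂ C]
      [CompleteSpace C] [StarModule ℂ C]
    (B : Type*) [NormedRing B] [StarRing B] [CStarRing B] [NormedAlgebra ℂ B]
      [CompleteSpace B] [StarModule ℂ B]
    (D : Type*) [NormedRing D] [StarRing D] [CStarRing D] [NormedAlgebra ℂ D]
      [CompleteSpace D] [StarModule ℂ D]
    (X : Type*) [NormedAddCommGroup X] [NormedSpace ℂ X]
    (Y : Type*) [NormedAddCommGroup Y] [NormedSpace ℂ Y] [CompleteSpace Y] where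
  /-- the unital isometric *-embedding of `A` into `C` -/
  ιA : A →⋆ₐ[ℂ] C
  /-- the unital isometric *-embedding of `B` into `D` -/
  ιB : B →⋆ₐ[ℂ] D
  ιA_isometry : Isometry ιA
  ιB_isometry : Isometry ιB
  /-- the inclusion of the closed subspace `X` into `Y` -/
  incl : X →ₗ[ℂ] Y
  incl_norm : ∀ x, ‖incl x‖ = ‖x‖
  incl_closed : IsClosed (Set.range incl)
  /-- left action of `C` on `Y` -/
  lC : C → Y → Y
  lC_one : ∀ y, lC 1 y = y
  lC_mul : ∀ c c' y, lC (c * c') y = lC c (lC c' y)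
  lC_add_right : ∀ c y y', lC c (y + y') = lC c y + lC c y'
  lC_add_left : ∀ c c' y, lC (c + c') y = lC c y + lC c' y
  lC_smul : ∀ (z : ℂ) c y, lC (z • c) y = z • lC c y
  /-- right action of `D` on `Y` -/
  rD : Y → D → Y
  rD_one : ∀ y, rD y 1 = y
  rD_mul : ∀ y d d', rD y (d * d') = rD (rD y d) d'
  rD_add_left : ∀ y y' d, rD (y + y') d = rD y d + rD y' d
  rD_add_right : ∀ y d d', rD y (d + d') = rD y d + rD y d'
  rD_smul : ∀ (z : ℂ) y d, rD y (z • d) = z • rD y d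
  smul_assoc : ∀ c y d, rD (lC c y) d = lC c (rD y d)
  /-- the left `C`-valued inner product on `Y` -/
  innC : Y → Y → C
  innC_add_left : ∀ y y' z, innC (y + y') z = innC y z + innC y' z
  innC_star : ∀ y z, star (innC y z) = innC z y
  innC_lC : ∀ c y z, innC (lC c y) z = c * innC y z
  innC_norm : ∀ y, ‖innC y y‖ = ‖y‖ ^ 2
  /-- the right `D`-valued inner product on `Y` -/
  innD : Y → Y → D
  innD_add_right : ∀ y z z', innD y (z + z') = innD y z + innD y z'
  innD_star : ∀ y z, star (innD y z) = innD z y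
  innD_rD : ∀ y z d, innD y (rD z d) = innD y z * d
  innD_norm : ∀ y, ‖innD y y‖ = ‖y‖ ^ 2
  imprimitivity : ∀ y z w, lC (innC y z) w = rD y (innD z w)
  innC_full : (Submodule.span ℂ {c : C | ∃ y z, innC y z = c}).topologicalClosure = ⊤
  innD_full : (Submodule.span ℂ {d : D | ∃ y z, innD y z = d}).topologicalClosure = ⊤
  /-- left action of `A` on `X`, the restriction of the `C`-action -/
  lA : A → X → X
  lA_compat : ∀ a x, incl (lA a x) = lC (ιA a) (incl x)
  /-- right action of `B` on `X`, the restriction of the `D`-action -/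
  rB : X → B → X
  rB_compat : ∀ x b, incl (rB x b) = rD (incl x) (ιB b)
  /-- the left `A`-valued inner product on `X`, the restriction of `innC` -/
  innA : X → X → A
  innA_compat : ∀ x z, ιA (innA x z) = innC (incl x) (incl z)
  /-- the right `B`-valued inner product on `X`, the restriction of `innD` -/
  innB : X → X → B
  innB_compat : ∀ x z, ιB (innB x z) = innD (incl x) (incl z)
  innA_full : (Submodule.span ℂ {a : A | ∃ x z, innA x z = a}).topologicalClosure = ⊤
  innB_full : (Submodule.span ℂ {b : B | ∃ x z, innB x z = b}).topologicalClosure = ⊤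

variable {A : Type*} [NormedRing A] [StarRing A] [CStarRing A] [NormedAlgebra ℂ A]
  [CompleteSpace A] [StarModule ℂ A]
variable {C : Type*} [NormedRing C] [StarRing C] [CStarRing C] [NormedAlgebra ℂ C]
  [CompleteSpace C] [StarModule ℂ C]
variable {B : Type*} [NormedRing B] [StarRing B] [CStarRing B] [NormedAlgebra ℂ B]
  [CompleteSpace B] [StarModule ℂ B]
variable {D : Type*} [NormedRing D] [StarRing D] [CStarRing D] [NormedAlgebra ℂ D]
  [CompleteSpace D] [StarModule ℂ D]
variable {X : Type*} [NormedAddCommGroup X] [NormedSpace ℂ X]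
variable {Y : Type*} [NormedAddCommGroup Y] [NormedSpace ℂ Y] [CompleteSpace Y]


/-!
Fullness of `⟨X, X⟩_B` and the fact that elements close to `1` are invertible give a
finite quasi-basis `∑ ⟨uᵢ, vᵢ⟩_B = 1`. The imprimitivity relation then expands
`⟨y, z⟩_C = ∑ ⟨y, uᵢ⟩_C ⟨vᵢ, z⟩_C`, so `τ y = ∑ φ(⟨y, uᵢ⟩_C) · vᵢ` works because `φ` is a
right `A`-module map, and uniqueness holds because `⟨·, ·⟩_A` is definite.
-/

namespace MoritaPair

variable (M : MoritaPair A C B D X Y)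

lemma incl_injective : Function.Injective M.incl := by
  intro x x' h
  rw [← sub_eq_zero, ← norm_eq_zero, ← M.incl_norm, map_sub, h, sub_self, norm_zero]

lemma innC_smul_left (c : ℂ) (y z : Y) : M.innC (c • y) z = c • M.innC y z := by
  rw [show c • y = M.lC (c • 1) y by rw [M.lC_smul, M.lC_one], M.innC_lC, smul_one_mul]

def innCₗ (z : Y) : Y →ₗ[ℂ] C where
  toFun y := M.innC y z
  map_add' y y' := M.innC_add_left y y' z
  map_smul' c y := M.innC_smul_left c y z

@[simp]
lemma innCₗ_apply (y z : Y) : M.innCₗ z y = M.innC y z := rfl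

def innAₗ (z : X) : X →ₗ[ℂ] A where
  toFun x := M.innA x z
  map_add' x x' := M.ιA_isometry.injective <| by
    simp only [map_add, M.innA_compat, M.innC_add_left]
  map_smul' c x := M.ιA_isometry.injective <| by
    simp only [map_smul, M.innA_compat, M.innC_smul_left, RingHom.id_apply]

@[simp]
lemma innAₗ_apply (x z : X) : M.innAₗ z x = M.innA x z := rfl

def lAₗ (x : X) : A →ₗ[ℂ] X where
  toFun a := M.lA a x
  map_add' a a' := M.incl_injective <| by
    simp only [map_add, M.lA_compat, M.lC_add_left]
  map_smul' c a := M.incl_injective <| by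
    simp only [map_smul, M.lA_compat, M.lC_smul, RingHom.id_apply]

@[simp]
lemma lAₗ_apply (a : A) (x : X) : M.lAₗ x a = M.lA a x := rfl

lemma innA_lA (a : A) (x z : X) : M.innA (M.lA a x) z = a * M.innA x z :=
  M.ιA_isometry.injective <| by rw [map_mul, M.innA_compat, M.innA_compat, M.lA_compat, M.innC_lC]

lemma eq_zero_of_innA_self_eq_zero {x : X} (hx : M.innA x x = 0) : x = 0 := by
  have h : M.innC (M.incl x) (M.incl x) = 0 := by rw [← M.innA_compat, hx, map_zero]
  rw [← norm_eq_zero, ← M.incl_norm, ← sq_eq_zero_iff, ← M.innC_norm, h, norm_zero]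

lemma ext_innA {w w' : X} (h : ∀ x, M.innA w x = M.innA w' x) : w = w' := by
  rw [← sub_eq_zero]
  apply M.eq_zero_of_innA_self_eq_zero
  rw [← innAₗ_apply, map_sub, innAₗ_apply, innAₗ_apply, h, sub_self]

lemma mul_innB (b : B) (x z : X) : b * M.innB x z = M.innB (M.rB x (star b)) z := by
  apply M.ιB_isometry.injective
  rw [map_mul, M.innB_compat, M.innB_compat, M.rB_compat, ← M.innD_star (M.incl z) (M.rD _ _),
    M.innD_rD, star_mul, M.innD_star, map_star, star_star]

lemma one_mem_span_innB : (1 : B) ∈ Ideal.span {b | ∃ x z, M.innB x z = b} := by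
  set S := {b | ∃ x z, M.innB x z = b}
  have h1 : (1 : B) ∈ closure (Submodule.span ℂ S : Set B) := by
    rw [← Submodule.topologicalClosure_coe, M.innB_full]
    trivial
  obtain ⟨s, hs, hs1⟩ := Metric.mem_closure_iff.mp h1 1 one_pos
  rw [← Ideal.eq_top_iff_one]
  refine Ideal.eq_top_of_norm_lt_one _ (Submodule.span_le_restrictScalars ℂ B S hs) ?_
  rwa [← dist_eq_norm]

lemma exists_sum_innB_eq_one : ∃ (n : ℕ) (u v : Fin n → X), ∑ i, M.innB (u i) (v i) = 1 := by
  obtain ⟨n, b, g, hsum⟩ := Submodule.mem_span_set'.mp M.one_mem_span_innB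
  choose x z hxz using fun i => (g i).2
  refine ⟨n, fun i => M.rB (x i) (star (b i)), z, ?_⟩
  simp only [← M.mul_innB, hxz, ← hsum, smul_eq_mul]

lemma exists_sum_innD_incl_eq_one :
    ∃ (n : ℕ) (u v : Fin n → X), ∑ i, M.innD (M.incl (u i)) (M.incl (v i)) = 1 := by
  obtain ⟨n, u, v, huv⟩ := M.exists_sum_innB_eq_one
  refine ⟨n, u, v, ?_⟩
  simp only [← M.innB_compat, ← map_sum, huv, map_one]

lemma innC_eq_sum_mul {ι : Type*} (s : Finset ι) (u v : ι → Y)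
    (huv : ∑ i ∈ s, M.innD (u i) (v i) = 1) (y z : Y) :
    M.innC y z = ∑ i ∈ s, M.innC y (u i) * M.innC (v i) z := by
  have hy : y = ∑ i ∈ s, M.lC (M.innC y (u i)) (v i) := by
    simp only [M.imprimitivity]
    conv_lhs => rw [← M.rD_one y, ← huv]
    exact map_sum (AddMonoidHom.mk' (M.rD y) (M.rD_add_right y)) _ _
  conv_lhs => rw [hy, ← innCₗ_apply, map_sum]
  simp only [innCₗ_apply, M.innC_lC]

end MoritaPair

/-- there is a unique linear map `τ : Y → X` such that
`⟨τ(y), x⟩_A = φ(⟨y, x⟩_C)` for all `x ∈ X`, `y ∈ Y`. -/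
theorem stmt0 (M : MoritaPair A C B D X Y) (φ : C →L[ℂ] A)
    (hφ : ∀ (a : A) (c : C), φ (M.ιA a * c) = a * φ c ∧ φ (c * M.ιA a) = φ c * a) :
    ∃! τ : Y →ₗ[ℂ] X, ∀ (y : Y) (x : X), M.innA (τ y) x = φ (M.innC y (M.incl x)) := by
  obtain ⟨n, u, v, huv⟩ := M.exists_sum_innD_incl_eq_one
  let τ : Y →ₗ[ℂ] X := ∑ i, M.lAₗ (v i) ∘ₗ φ.toLinearMap ∘ₗ M.innCₗ (M.incl (u i))
  have hτ : ∀ y x, M.innA (τ y) x = φ (M.innC y (M.incl x)) := by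
    intro y x
    calc M.innA (τ y) x = ∑ i, φ (M.innC y (M.incl (u i))) * M.innA (v i) x := by
          simp only [τ, LinearMap.sum_apply, LinearMap.comp_apply, ContinuousLinearMap.coe_coe,
            M.innCₗ_apply, M.lAₗ_apply]
          rw [← M.innAₗ_apply, map_sum]
          simp only [M.innAₗ_apply, M.innA_lA]
      _ = φ (∑ i, M.innC y (M.incl (u i)) * M.innC (M.incl (v i)) (M.incl x)) := by
          simp only [map_sum, ← (hφ _ _).2, M.innA_compat]
      _ = φ (M.innC y (M.incl x)) := by
          rw [← M.innC_eq_sum_mul _ _ _ huv]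
  exact ⟨τ, hτ, fun τ' hτ' => LinearMap.ext fun y =>
    M.ext_innA fun x => (hτ' y x).trans (hτ y x).symm⟩
end

section
/- The linear map τ : Y → X determined by ⟨τ(y), x⟩_A = φ(⟨y, x⟩_C) is a right B-module map: τ(y·b) = τ(y)·b for all b ∈ B, y ∈ Y. -/
variable {A : Type*} [NormedRing A] [StarRing A] [CStarRing A] [NormedAlgebra ℂ A]
  [CompleteSpace A] [StarModule ℂ A]
variable {C : Type*} [NormedRing C] [StarRing C] [CStarRing C] [NormedAlgebra ℂ C]
  [CompleteSpace C] [StarModule ℂ C]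
variable {B : Type*} [NormedRing B] [StarRing B] [CStarRing B] [NormedAlgebra ℂ B]
  [CompleteSpace B] [StarModule ℂ B]
variable {D : Type*} [NormedRing D] [StarRing D] [CStarRing D] [NormedAlgebra ℂ D]
  [CompleteSpace D] [StarModule ℂ D]
variable {X : Type*} [NormedAddCommGroup X] [NormedSpace ℂ X]
variable {Y : Type*} [NormedAddCommGroup Y] [NormedSpace ℂ Y] [CompleteSpace Y]

/-! Moving `d` across the `C`-valued inner product turns it into `d*` on the other argument,
`⟨y·d, w⟩_C = ⟨y, w·d*⟩_C`: both sides act on `Y` in the same way by the imprimitivity relation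
`⟨y, z⟩_C·w = y·⟨z, w⟩_D`, and `C` acts faithfully because `⟨·,·⟩_C` is full. Restricted to `X`
this gives `⟨τ(y·b), z⟩_A = φ⟨y, z·b*⟩_C = ⟨τ(y), z·b*⟩_A = ⟨τ(y)·b, z⟩_A` for all `z ∈ X`, and
`⟨·,·⟩_A` is definite. -/

theorem eq_zero_of_mul_eq_zero_of_topologicalClosure_span_eq_top {𝕜 R : Type*}
    [NontriviallyNormedField 𝕜] [NormedRing R] [NormedAlgebra 𝕜 R] {S : Set R}
    (hS : (Submodule.span 𝕜 S).topologicalClosure = ⊤) {c : R} (hc : ∀ s ∈ S, c * s = 0) :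
    c = 0 := by
  let f : R →L[𝕜] R := ContinuousLinearMap.mul 𝕜 R c
  have hspan : Submodule.span 𝕜 S ≤ f.ker := Submodule.span_le.mpr fun s hs => hc s hs
  have hker : (⊤ : Submodule 𝕜 R) ≤ f.ker :=
    hS ▸ Submodule.topologicalClosure_minimal _ hspan f.isClosed_ker
  simpa [f] using hker (Submodule.mem_top (x := (1 : R)))

namespace MoritaPair

variable (M : MoritaPair A C B D X Y)

theorem innC_zero_left (z : Y) : M.innC 0 z = 0 :=
  (AddMonoidHom.mk' (M.innC · z) fun u v => M.innC_add_left u v z).map_zero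

theorem innC_sub_left (u v z : Y) : M.innC (u - v) z = M.innC u z - M.innC v z :=
  (AddMonoidHom.mk' (M.innC · z) fun u v => M.innC_add_left u v z).map_sub u v

theorem lC_sub_left (c c' : C) (u : Y) : M.lC (c - c') u = M.lC c u - M.lC c' u :=
  (AddMonoidHom.mk' (M.lC · u) fun c c' => M.lC_add_left c c' u).map_sub c c'

theorem lC_injective {c c' : C} (h : ∀ u, M.lC c u = M.lC c' u) : c = c' := by
  refine sub_eq_zero.mp (eq_zero_of_mul_eq_zero_of_topologicalClosure_span_eq_top M.innC_full ?_)
  rintro _ ⟨u, z, rfl⟩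
  rw [← M.innC_lC, M.lC_sub_left, h, sub_self, M.innC_zero_left]

theorem innD_rD_left (w u : Y) (d : D) : M.innD (M.rD w d) u = star d * M.innD w u := by
  rw [← M.innD_star u, M.innD_rD, star_mul, M.innD_star]

theorem innC_rD_left (y w : Y) (d : D) :
    M.innC (M.rD y d) w = M.innC y (M.rD w (star d)) :=
  M.lC_injective fun u => by
    rw [M.imprimitivity, M.imprimitivity, M.innD_rD_left, star_star, M.rD_mul]

theorem ιA_injective : Function.Injective M.ιA :=
  M.ιA_isometry.injective

theorem innA_rB_left (x z : X) (b : B) : M.innA (M.rB x b) z = M.innA x (M.rB z (star b)) :=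
  M.ιA_injective <| by
    rw [M.innA_compat, M.innA_compat, M.rB_compat, M.rB_compat, M.innC_rD_left, map_star]

theorem innA_sub_left (x x' z : X) : M.innA (x - x') z = M.innA x z - M.innA x' z :=
  M.ιA_injective <| by
    rw [map_sub, M.innA_compat, M.innA_compat, M.innA_compat, map_sub, M.innC_sub_left]

theorem norm_innA_self (x : X) : ‖M.innA x x‖ = ‖x‖ ^ 2 := by
  rw [← M.ιA_isometry.norm_map_of_map_zero (map_zero _), M.innA_compat, M.innC_norm,
    M.incl_norm]

theorem eq_of_forall_innA_eq {x x' : X} (h : ∀ z, M.innA x z = M.innA x' z) : x = x' := by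
  have hself : M.innA (x - x') (x - x') = 0 := by rw [M.innA_sub_left, h, sub_self]
  have hnorm : ‖x - x'‖ ^ 2 = 0 := by rw [← M.norm_innA_self, hself, norm_zero]
  exact sub_eq_zero.mp (norm_eq_zero.mp (pow_eq_zero_iff two_ne_zero |>.mp hnorm))

end MoritaPair

theorem stmt4_general (M : MoritaPair A C B D X Y) (φ : C →L[ℂ] A)
    (τ : Y →ₗ[ℂ] X)
    (hτ : ∀ (y : Y) (x : X), M.innA (τ y) x = φ (M.innC y (M.incl x))) :
    ∀ (b : B) (y : Y), τ (M.rD y (M.ιB b)) = M.rB (τ y) b := by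
  intro b y
  refine M.eq_of_forall_innA_eq fun z => ?_
  rw [hτ, M.innC_rD_left, ← map_star, ← M.rB_compat, ← hτ, M.innA_rB_left]

/-- the map `τ` determined by `⟨τ(y), x⟩_A = φ(⟨y, x⟩_C)` is a right
`B`-module map: `τ(y·b) = τ(y)·b`. -/
theorem stmt4 (M : MoritaPair A C B D X Y) (φ : C →L[ℂ] A)
    (hφ : ∀ (a : A) (c : C), φ (M.ιA a * c) = a * φ c ∧ φ (c * M.ιA a) = φ c * a)
    (τ : Y →ₗ[ℂ] X)
    (hτ : ∀ (y : Y) (x : X), M.innA (τ y) x = φ (M.innC y (M.incl x))) :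
    ∀ (b : B) (y : Y), τ (M.rD y (M.ιB b)) = M.rB (τ y) b :=
  stmt4_general M φ τ hτ
end

section
/- Suppose φ : C → A has a quasi-basis {(u_i, v_i)}_{i=1}^m, and let p ∈ M_n(A) be a full projection with elements a_1,…,a_K, b_1,…,b_K ∈ M_n(A) satisfying Σ_j a_j p b_j = 1. Then the finite family {(p(u_i ⊗ I_n)a_j p, p b_j(v_i ⊗ I_n)p)}_{i,j} is a quasi-basis for the map F(φ) = (φ ⊗ id)|_{pM_n(C)p} : pM_n(C)p → pM_n(A)p. -/
variable {A : Type*} [NormedRing A] [StarRing A] [CStarRing A] [NormedAlgebra ℂ A]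
  [CompleteSpace A] [StarModule ℂ A]
variable {C : Type*} [NormedRing C] [StarRing C] [CStarRing C] [NormedAlgebra ℂ C]
  [CompleteSpace C] [StarModule ℂ C]
variable {B : Type*} [NormedRing B] [StarRing B] [CStarRing B] [NormedAlgebra ℂ B]
  [CompleteSpace B] [StarModule ℂ B]
variable {D : Type*} [NormedRing D] [StarRing D] [CStarRing D] [NormedAlgebra ℂ D]
  [CompleteSpace D] [StarModule ℂ D]
variable {X : Type*} [NormedAddCommGroup X] [NormedSpace ℂ X]
variable {Y : Type*} [NormedAddCommGroup Y] [NormedSpace ℂ Y] [CompleteSpace Y]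

section QuasiBasis

open Finset

variable {R : Type*} [Semiring R] {ι κ : Type*} [Fintype ι] [Fintype κ]

def IsQuasiBasisOn (E : R → R) (s : Set R) (u v : ι → R) : Prop :=
  ∀ r ∈ s, r = ∑ i, u i * E (v i * r) ∧ r = ∑ i, E (r * u i) * v i

-- Fullness `∑ⱼ aⱼ P bⱼ = 1` is inserted between the two halves of each term of the quasi-basis.
theorem IsQuasiBasisOn.corner {E : R → R} {u v : ι → R}
    (hE : IsQuasiBasisOn E Set.univ u v) (S : Subsemiring R)
    (hE_left : ∀ s ∈ S, ∀ r, E (s * r) = s * E r)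
    (hE_right : ∀ s ∈ S, ∀ r, E (r * s) = E r * s)
    {P : R} (hP : P * P = P) (hPS : P ∈ S) {a b : κ → R} (ha : ∀ j, a j ∈ S)
    (hb : ∀ j, b j ∈ S) (hfull : ∑ j, a j * P * b j = 1) :
    IsQuasiBasisOn E {w | w = P * w * P} (fun x : ι × κ => P * u x.1 * a x.2 * P)
      (fun x : ι × κ => P * b x.2 * v x.1 * P) := by
  intro w hw
  have hPw : P * w = w := by rw [hw, ← mul_assoc, ← mul_assoc, hP]
  have hwP : w * P = w := by rw [hw, mul_assoc, hP]
  have hPP : ∀ r, P * (P * r) = P * r := fun r => by rw [← mul_assoc, hP]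
  constructor
  · have hterm : ∀ i j, P * u i * a j * P * E (P * b j * v i * P * w) =
        P * u i * (a j * P * b j) * E (v i * w) := fun i j => by
      have : P * b j * v i * P * w = P * b j * (v i * w) := by simp only [mul_assoc, hPw]
      rw [this, hE_left _ (S.mul_mem hPS (hb j))]
      simp only [mul_assoc, hPP]
    calc w = P * w := hPw.symm
      _ = ∑ i, P * u i * (∑ j, a j * P * b j) * E (v i * w) := by
        conv_lhs => rw [(hE w trivial).1]
        rw [hfull]
        simp only [mul_one, mul_sum, mul_assoc]
      _ = _ := by simp only [Fintype.sum_prod_type, hterm, mul_sum, sum_mul]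
  · have hterm : ∀ i j, E (w * (P * u i * a j * P)) * (P * b j * v i * P) =
        E (w * u i) * (a j * P * b j) * v i * P := fun i j => by
      have : w * (P * u i * a j * P) = w * u i * (a j * P) := by
        simp only [← mul_assoc, hwP]
      rw [this, hE_right _ (S.mul_mem (ha j) hPS)]
      simp only [mul_assoc, hPP]
    calc w = w * P := hwP.symm
      _ = ∑ i, E (w * u i) * (∑ j, a j * P * b j) * v i * P := by
        conv_lhs => rw [(hE w trivial).2]
        rw [hfull]
        simp only [mul_one, sum_mul]
      _ = _ := by simp only [Fintype.sum_prod_type, hterm, mul_sum, sum_mul]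

end QuasiBasis

section Matrix

variable {n : Type*} [Fintype n]

theorem IsQuasiBasisOn.matrix_scalar [DecidableEq n] {R : Type*} [Semiring R] {ι : Type*}
    [Fintype ι] {E : R → R} {u v : ι → R} (hE : IsQuasiBasisOn E Set.univ u v) :
    IsQuasiBasisOn (fun W : Matrix n n R => W.map E) Set.univ
      (fun i => Matrix.scalar n (u i)) (fun i => Matrix.scalar n (v i)) := by
  intro W _
  constructor <;> ext k l <;>
    simp only [Matrix.sum_apply, Matrix.scalar_apply, Matrix.map_apply, Matrix.diagonal_mul,
      Matrix.mul_diagonal]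
  exacts [(hE (W k l) trivial).1, (hE (W k l) trivial).2]

variable {R T : Type*} [Semiring R] [Semiring T] {F G : Type*} [FunLike F R T]
  [RingHomClass F R T] [FunLike G T R] [AddMonoidHomClass G T R]

theorem Matrix.map_map_mul (f : F) (g : G) (hg : ∀ r t, g (f r * t) = r * g t)
    (M : Matrix n n R) (W : Matrix n n T) :
    (M.map f * W).map (fun t => f (g t)) = M.map f * W.map (fun t => f (g t)) := by
  ext k l
  simp only [Matrix.map_apply, Matrix.mul_apply, map_sum, hg, map_mul]

theorem Matrix.map_mul_map (f : F) (g : G) (hg : ∀ r t, g (t * f r) = g t * r)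
    (W : Matrix n n T) (M : Matrix n n R) :
    (W * M.map f).map (fun t => f (g t)) = W.map (fun t => f (g t)) * M.map f := by
  ext k l
  simp only [Matrix.map_apply, Matrix.mul_apply, map_sum, hg, map_mul]

end Matrix

theorem stmt14_general (ιA : A →⋆ₐ[ℂ] C)
    (φ : C →L[ℂ] A)
    (hφ : ∀ (a : A) (c : C), φ (ιA a * c) = a * φ c ∧ φ (c * ιA a) = φ c * a)
    (m : ℕ) (u v : Fin m → C)
    (hqb : ∀ c : C, c = ∑ i, u i * ιA (φ (v i * c)) ∧ c = ∑ i, ιA (φ (c * u i)) * v i)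
    (n K : ℕ) (p : Matrix (Fin n) (Fin n) A)
    (hp : p * p = p)
    (a b : Fin K → Matrix (Fin n) (Fin n) A)
    (hfull : ∑ j, a j * p * b j = 1) :
    ∀ w : Matrix (Fin n) (Fin n) C, w = p.map ιA * w * p.map ιA →
      (w = ∑ i, ∑ j,
          (p.map ιA * Matrix.scalar (Fin n) (u i) * (a j).map ιA * p.map ιA) *
            ((p.map ιA * (b j).map ιA * Matrix.scalar (Fin n) (v i) * p.map ιA * w).map
              (fun c => ιA (φ c)))) ∧
      (w = ∑ i, ∑ j,
          ((w * (p.map ιA * Matrix.scalar (Fin n) (u i) * (a j).map ιA * p.map ιA)).map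
              (fun c => ιA (φ c))) *
            (p.map ιA * (b j).map ιA * Matrix.scalar (Fin n) (v i) * p.map ιA)) := by
  have hcorner := (IsQuasiBasisOn.matrix_scalar (n := Fin n) fun c _ => hqb c).corner
    (RingHom.mapMatrix (ιA : A →+* C)).rangeS
    (by rintro _ ⟨M, rfl⟩ W; exact Matrix.map_map_mul ιA φ (fun a c => (hφ a c).1) M W)
    (by rintro _ ⟨M, rfl⟩ W; exact Matrix.map_mul_map ιA φ (fun a c => (hφ a c).2) W M)
    (P := p.map ιA) (by rw [← Matrix.map_mul, hp]) ⟨p, rfl⟩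
    (a := fun j => (a j).map ιA) (b := fun j => (b j).map ιA) (fun j => ⟨a j, rfl⟩)
    (fun j => ⟨b j, rfl⟩) (by simpa using congrArg (RingHom.mapMatrix (ιA : A →+* C)) hfull)
  intro w hw
  simpa only [Fintype.sum_prod_type] using hcorner w hw

/-- if `φ : C → A` has a quasi-basis `{(u_i, v_i)}` and `p ∈ M_n(A)` is a
projection with `Σ_j a_j p b_j = 1`, then `{(p(u_i ⊗ Iₙ)a_j p, p b_j (v_i ⊗ Iₙ)p)}` is a
quasi-basis for `F(φ) = (φ ⊗ id)|_{pM_n(C)p} : pM_n(C)p → pM_n(A)p`.  All equations are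
written inside `M_n(C)` via the entrywise embedding `ιA : A → C`. -/
theorem stmt14 (ιA : A →⋆ₐ[ℂ] C) (hιA : Isometry ιA)
    (φ : C →L[ℂ] A)
    (hφ : ∀ (a : A) (c : C), φ (ιA a * c) = a * φ c ∧ φ (c * ιA a) = φ c * a)
    (m : ℕ) (u v : Fin m → C)
    (hqb : ∀ c : C, c = ∑ i, u i * ιA (φ (v i * c)) ∧ c = ∑ i, ιA (φ (c * u i)) * v i)
    (n K : ℕ) (p : Matrix (Fin n) (Fin n) A)
    (hp : p * p = p) (hpstar : star p = p)
    (a b : Fin K → Matrix (Fin n) (Fin n) A)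
    (hfull : ∑ j, a j * p * b j = 1) :
    ∀ w : Matrix (Fin n) (Fin n) C, w = p.map ιA * w * p.map ιA →
      (w = ∑ i, ∑ j,
          (p.map ιA * Matrix.scalar (Fin n) (u i) * (a j).map ιA * p.map ιA) *
            ((p.map ιA * (b j).map ιA * Matrix.scalar (Fin n) (v i) * p.map ιA * w).map
              (fun c => ιA (φ c)))) ∧
      (w = ∑ i, ∑ j,
          ((w * (p.map ιA * Matrix.scalar (Fin n) (u i) * (a j).map ιA * p.map ιA)).map
              (fun c => ιA (φ c))) *
            (p.map ιA * (b j).map ιA * Matrix.scalar (Fin n) (v i) * p.map ιA)) :=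
  stmt14_general ιA φ hφ m u v hqb n K p hp a b hfull
end

section
/- Let φ : C → A be a bounded A-bimodule linear map with a quasi-basis, and let θ^φ be its modular automorphism of A′ ∩ C. Then, with π : A′ ∩ C → (pM_n(A)p)′ ∩ pM_n(C)p, c ↦ (c ⊗ I_n)p, an isomorphism of relative commutants, the modular automorphism of F(φ) = (φ ⊗ id)|_{pM_n(C)p} satisfies θ^{F(φ)} = π ∘ θ^φ ∘ π^{-1}. -/
variable {A : Type*} [NormedRing A] [StarRing A] [CStarRing A] [NormedAlgebra ℂ A]
  [CompleteSpace A] [StarModule ℂ A]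
variable {C : Type*} [NormedRing C] [StarRing C] [CStarRing C] [NormedAlgebra ℂ C]
  [CompleteSpace C] [StarModule ℂ C]
variable {B : Type*} [NormedRing B] [StarRing B] [CStarRing B] [NormedAlgebra ℂ B]
  [CompleteSpace B] [StarModule ℂ B]
variable {D : Type*} [NormedRing D] [StarRing D] [CStarRing D] [NormedAlgebra ℂ D]
  [CompleteSpace D] [StarModule ℂ D]
variable {X : Type*} [NormedAddCommGroup X] [NormedSpace ℂ X]
variable {Y : Type*} [NormedAddCommGroup Y] [NormedSpace ℂ Y] [CompleteSpace Y]

/-- let `φ : C → A` have a quasi-basis, let `p ∈ M_n(A)` be a full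
projection, and let `π(c) = (c ⊗ Iₙ)p` be the isomorphism of `A′ ∩ C` onto
`(pM_n(A)p)′ ∩ pM_n(C)p`.  If `θ` is the modular automorphism of `φ` (i.e. satisfies the
modular condition `φ(xy) = φ(y θ(x))` on `A′ ∩ C`) and `Θ` is the modular automorphism of
`F(φ) = (φ ⊗ id)|_{pM_n(C)p}` (i.e. satisfies the corresponding modular condition on the
corner), then `Θ = π ∘ θ ∘ π⁻¹`, i.e. `Θ(π(c)) = π(θ(c))` on `A′ ∩ C`. -/
theorem stmt17 (ιA : A →⋆ₐ[ℂ] C) (hιA : Isometry ιA)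
    (φ : C →L[ℂ] A)
    (hφ : ∀ (a : A) (c : C), φ (ιA a * c) = a * φ c ∧ φ (c * ιA a) = φ c * a)
    (m : ℕ) (u v : Fin m → C)
    (hqb : ∀ c : C, c = ∑ i, u i * ιA (φ (v i * c)) ∧ c = ∑ i, ιA (φ (c * u i)) * v i)
    (n K : ℕ) (p : Matrix (Fin n) (Fin n) A)
    (hp : p * p = p) (hpstar : star p = p)
    (a b : Fin K → Matrix (Fin n) (Fin n) A)
    (hfull : ∑ j, a j * p * b j = 1)
    -- the modular automorphism `θ^φ` of `A′ ∩ C`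
    (θ : C → C)
    (hθmap : ∀ c : C, (∀ a' : A, ιA a' * c = c * ιA a') →
      (∀ a' : A, ιA a' * θ c = θ c * ιA a'))
    (hθmod : ∀ (c y : C), (∀ a' : A, ιA a' * c = c * ιA a') → φ (c * y) = φ (y * θ c))
    -- the modular automorphism `θ^{F(φ)}` of `(pM_n(A)p)′ ∩ pM_n(C)p`
    (Θ : Matrix (Fin n) (Fin n) C → Matrix (Fin n) (Fin n) C)
    (hΘmap : ∀ x : Matrix (Fin n) (Fin n) C,
      (x = p.map ιA * x * p.map ιA ∧ ∀ mA : Matrix (Fin n) (Fin n) A,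
        (p.map ιA * mA.map ιA * p.map ιA) * x = x * (p.map ιA * mA.map ιA * p.map ιA)) →
      (Θ x = p.map ιA * Θ x * p.map ιA ∧ ∀ mA : Matrix (Fin n) (Fin n) A,
        (p.map ιA * mA.map ιA * p.map ιA) * Θ x = Θ x * (p.map ιA * mA.map ιA * p.map ιA)))
    (hΘmod : ∀ x y : Matrix (Fin n) (Fin n) C,
      (x = p.map ιA * x * p.map ιA ∧ ∀ mA : Matrix (Fin n) (Fin n) A,
        (p.map ιA * mA.map ιA * p.map ιA) * x = x * (p.map ιA * mA.map ιA * p.map ιA)) →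
      y = p.map ιA * y * p.map ιA →
      (x * y).map (fun c => ιA (φ c)) = (y * Θ x).map (fun c => ιA (φ c))) :
    ∀ c : C, (∀ a' : A, ιA a' * c = c * ιA a') →
      Θ (Matrix.scalar (Fin n) c * p.map ιA) = Matrix.scalar (Fin n) (θ c) * p.map ιA := by
  intro c hc
  classical
  -- basic multiplicativity of entrywise `ιA`
  have hmul : ∀ M N : Matrix (Fin n) (Fin n) A,
      (M * N).map ιA = M.map ιA * N.map ιA := by
    intro M N; ext i j
    simp [Matrix.map_apply, Matrix.mul_apply, map_sum]
  have hqq : p.map ιA * p.map ιA = p.map ιA := by rw [← hmul, hp]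
  -- scalar matrices with entries commuting with `ιA(A)` commute with `ιA`-matrices
  have hscM : ∀ c' : C, (∀ a' : A, ιA a' * c' = c' * ιA a') →
      ∀ M : Matrix (Fin n) (Fin n) A,
        Commute (Matrix.scalar (Fin n) c') (M.map ιA) := by
    intro c' hc' M
    show _ * _ = _ * _
    ext i j
    simp only [Matrix.scalar_apply, Matrix.diagonal_mul, Matrix.mul_diagonal,
      Matrix.map_apply]
    exact (hc' (M i j)).symm
  -- the "expectation" pulls `ιA`-matrices out on the left and right
  have hEl : ∀ (M : Matrix (Fin n) (Fin n) A) (w : Matrix (Fin n) (Fin n) C),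
      (M.map ιA * w).map (fun r => ιA (φ r)) = M.map ιA * w.map (fun r => ιA (φ r)) := by
    intro M w; ext i j
    simp only [Matrix.map_apply, Matrix.mul_apply, map_sum]
    exact Finset.sum_congr rfl fun k _ => by rw [(hφ (M i k) (w k j)).1, map_mul]
  -- recovery formula from the quasi-basis
  have hrec : ∀ w : Matrix (Fin n) (Fin n) C,
      w = ∑ i, Matrix.scalar (Fin n) (u i) *
        ((Matrix.scalar (Fin n) (v i) * w).map (fun r => ιA (φ r))) := by
    intro w; ext k j
    simp only [Matrix.sum_apply, Matrix.scalar_apply, Matrix.diagonal_mul,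
      Matrix.map_apply]
    exact (hqb (w k j)).1
  -- fullness transported to `M_n(C)`
  have hmapsum : ∀ g : Fin K → Matrix (Fin n) (Fin n) A,
      (∑ t, g t).map (⇑ιA) = ∑ t, (g t).map ιA := by
    intro g; ext i j
    simp [Matrix.map_apply, Matrix.sum_apply, map_sum]
  have hfullι : ∑ t, (a t).map ιA * p.map ιA * (b t).map ιA = 1 := by
    calc ∑ t, (a t).map ιA * p.map ιA * (b t).map ιA
        = ∑ t, (a t * p * b t).map ιA := by
          refine Finset.sum_congr rfl fun t _ => ?_
          rw [hmul, hmul]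
      _ = (∑ t, a t * p * b t).map ιA := (hmapsum _).symm
      _ = (1 : Matrix (Fin n) (Fin n) A).map ιA := by rw [hfull]
      _ = 1 := Matrix.map_one _ (map_zero ιA) (map_one ιA)
  -- little idempotency facts
  have cornerL : ∀ x : Matrix (Fin n) (Fin n) C,
      x = p.map ιA * x * p.map ιA → p.map ιA * x = x := by
    intro x hx
    conv_lhs => rw [hx]
    rw [← mul_assoc, ← mul_assoc, hqq, ← hx]
  have cornerR : ∀ x : Matrix (Fin n) (Fin n) C,
      x = p.map ιA * x * p.map ιA → x * p.map ιA = x := by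
    intro x hx
    conv_lhs => rw [hx]
    rw [mul_assoc, hqq, ← hx]
  have cornerOf : ∀ w : Matrix (Fin n) (Fin n) C,
      p.map ιA * w * p.map ιA =
        p.map ιA * (p.map ιA * w * p.map ιA) * p.map ιA := by
    intro w
    have h1 : p.map ιA * (p.map ιA * w * p.map ιA) = p.map ιA * w * p.map ιA := by
      rw [← mul_assoc, ← mul_assoc, hqq]
    have h2 : (p.map ιA * w * p.map ιA) * p.map ιA = p.map ιA * w * p.map ιA := by
      rw [mul_assoc, hqq]
    rw [h1, h2]
  have hq_corner : ∀ M : Matrix (Fin n) (Fin n) A,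
      Commute (p.map ιA) (p.map ιA * M.map ιA * p.map ιA) := by
    intro M
    have h1 : p.map ιA * (p.map ιA * M.map ιA * p.map ιA) =
        p.map ιA * M.map ιA * p.map ιA := by
      rw [← mul_assoc, ← mul_assoc, hqq]
    have h2 : (p.map ιA * M.map ιA * p.map ιA) * p.map ιA =
        p.map ιA * M.map ιA * p.map ιA := by
      rw [mul_assoc, hqq]
    show _ * _ = _ * _
    rw [h1, h2]
  have cornerSelf : ∀ c' : C, (∀ a' : A, ιA a' * c' = c' * ιA a') →
      Matrix.scalar (Fin n) c' * p.map ιA =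
        p.map ιA * (Matrix.scalar (Fin n) c' * p.map ιA) * p.map ιA := by
    intro c' hc'
    have hs := hscM c' hc' p
    have h1 : p.map ιA * (Matrix.scalar (Fin n) c' * p.map ιA) =
        Matrix.scalar (Fin n) c' * p.map ιA := by
      rw [← mul_assoc, ← hs.eq, mul_assoc, hqq]
    rw [h1, mul_assoc, hqq]
  -- x := π(c) is in the relative commutant
  have hx : Matrix.scalar (Fin n) c * p.map ιA =
        p.map ιA * (Matrix.scalar (Fin n) c * p.map ιA) * p.map ιA ∧
      ∀ mA : Matrix (Fin n) (Fin n) A,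
        (p.map ιA * mA.map ιA * p.map ιA) * (Matrix.scalar (Fin n) c * p.map ιA) =
          (Matrix.scalar (Fin n) c * p.map ιA) * (p.map ιA * mA.map ιA * p.map ιA) := by
    refine ⟨cornerSelf c hc, fun mA => ?_⟩
    have hsq := hscM c hc p
    have hsM := hscM c hc mA
    have h : Commute (Matrix.scalar (Fin n) c * p.map ιA)
        (p.map ιA * mA.map ιA * p.map ιA) :=
      Commute.mul_left ((hsq.mul_right hsM).mul_right hsq) (hq_corner mA)
    exact h.eq.symm
  -- `z₂ := π(θ c)` facts
  have hθc := hθmap c hc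
  have hsθq := hscM (θ c) hθc p
  have hz2corner := cornerSelf (θ c) hθc
  -- corner property of `z₁ := Θ x`
  have hΘ1 := hΘmap _ hx
  -- the two modular conditions agree against all corner elements
  have hkey : ∀ y : Matrix (Fin n) (Fin n) C, y = p.map ιA * y * p.map ιA →
      (y * Θ (Matrix.scalar (Fin n) c * p.map ιA)).map (fun r => ιA (φ r)) =
        (y * (Matrix.scalar (Fin n) (θ c) * p.map ιA)).map (fun r => ιA (φ r)) := by
    intro y hy
    have hqy := cornerL y hy
    have hyq := cornerR y hy
    have hxy : (Matrix.scalar (Fin n) c * p.map ιA) * y =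
        Matrix.scalar (Fin n) c * y := by rw [mul_assoc, hqy]
    have hyz2 : y * (Matrix.scalar (Fin n) (θ c) * p.map ιA) =
        y * Matrix.scalar (Fin n) (θ c) := by
      rw [hsθq.eq, ← mul_assoc, hyq]
    calc (y * Θ (Matrix.scalar (Fin n) c * p.map ιA)).map (fun r => ιA (φ r))
        = ((Matrix.scalar (Fin n) c * p.map ιA) * y).map (fun r => ιA (φ r)) :=
          (hΘmod _ y hx hy).symm
      _ = (Matrix.scalar (Fin n) c * y).map (fun r => ιA (φ r)) := by rw [hxy]
      _ = (y * Matrix.scalar (Fin n) (θ c)).map (fun r => ιA (φ r)) := by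
          ext i j
          simp only [Matrix.map_apply, Matrix.scalar_apply, Matrix.diagonal_mul,
            Matrix.mul_diagonal]
          exact congrArg ιA (hθmod c (y i j) hc)
      _ = (y * (Matrix.scalar (Fin n) (θ c) * p.map ιA)).map (fun r => ιA (φ r)) := by
          rw [hyz2]
  -- the difference
  set z : Matrix (Fin n) (Fin n) C :=
    Θ (Matrix.scalar (Fin n) c * p.map ιA) - Matrix.scalar (Fin n) (θ c) * p.map ιA
    with hzdef
  have hzcorner : z = p.map ιA * z * p.map ιA := by
    rw [hzdef, mul_sub, sub_mul, ← hΘ1.1, ← hz2corner]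
  have hqz := cornerL z hzcorner
  have hEzero : ∀ y : Matrix (Fin n) (Fin n) C, y = p.map ιA * y * p.map ιA →
      (y * z).map (fun r => ιA (φ r)) = 0 := by
    intro y hy
    have h3 := hkey y hy
    have h2 : y * z = y * Θ (Matrix.scalar (Fin n) c * p.map ιA) -
        y * (Matrix.scalar (Fin n) (θ c) * p.map ιA) := by rw [hzdef, mul_sub]
    rw [h2]
    ext i j
    have h4 := congrFun (congrFun h3 i) j
    simp only [Matrix.map_apply] at h4
    simp only [Matrix.map_apply, Matrix.sub_apply, map_sub, Matrix.zero_apply]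
    rw [sub_eq_zero]
    exact h4
  -- each building block of the recovery formula vanishes
  have hterm : ∀ (t : Fin K) (i : Fin m),
      p.map ιA * (((b t).map ιA * (Matrix.scalar (Fin n) (v i) * z)).map
        (fun r => ιA (φ r))) = 0 := by
    intro t i
    have hycorner := cornerOf ((b t).map ιA * Matrix.scalar (Fin n) (v i))
    have h0 := hEzero _ hycorner
    have hyz : (p.map ιA * ((b t).map ιA * Matrix.scalar (Fin n) (v i)) * p.map ιA)
        * z = p.map ιA * ((b t).map ιA * (Matrix.scalar (Fin n) (v i) * z)) := by
      rw [mul_assoc, hqz, mul_assoc, mul_assoc]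
    rw [← hEl p]
    rw [← hyz]
    exact h0
  -- put everything together
  have hz0 : z = 0 := by
    calc z = ∑ i, Matrix.scalar (Fin n) (u i) *
          ((Matrix.scalar (Fin n) (v i) * z).map (fun r => ιA (φ r))) := hrec z
      _ = ∑ i, Matrix.scalar (Fin n) (u i) *
          ((∑ t, (a t).map ιA * p.map ιA * (b t).map ιA) *
            ((Matrix.scalar (Fin n) (v i) * z).map (fun r => ιA (φ r)))) := by
          rw [hfullι]; simp
      _ = ∑ i, ∑ t, Matrix.scalar (Fin n) (u i) *
          ((a t).map ιA * (p.map ιA * ((b t).map ιA *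
            ((Matrix.scalar (Fin n) (v i) * z).map (fun r => ιA (φ r)))))) := by
          simp [Finset.sum_mul, Finset.mul_sum, mul_assoc]
      _ = ∑ i, ∑ t, Matrix.scalar (Fin n) (u i) *
          ((a t).map ιA * (p.map ιA *
            (((b t).map ιA * (Matrix.scalar (Fin n) (v i) * z)).map
              (fun r => ιA (φ r))))) := by
          simp only [hEl]
      _ = ∑ i, ∑ t, Matrix.scalar (Fin n) (u i) * ((a t).map ιA * (0 : Matrix (Fin n) (Fin n) C)) := by
          refine Finset.sum_congr rfl fun i _ => Finset.sum_congr rfl fun t _ => ?_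
          rw [hterm t i]
      _ = 0 := by simp
  have := sub_eq_zero.mp (hzdef ▸ hz0)
  exact this
end

section
/- If (X, Y) and (Z, W) are equivalent pairs implementing the strong Morita equivalence of the inclusions A ⊂ C and B ⊂ D (i.e., there is a C–D-equivalence bimodule isomorphism Φ : Y → W with Φ(X) = Z), then the induced isometric isomorphisms coincide: f_{(X,Y)} = f_{(Z,W)}. -/
variable {A : Type*} [NormedRing A] [StarRing A] [CStarRing A] [NormedAlgebra ℂ A]
  [CompleteSpace A] [StarModule ℂ A]
variable {C : Type*} [NormedRing C] [StarRing C] [CStarRing C] [NormedAlgebra ℂ C]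
  [CompleteSpace C] [StarModule ℂ C]
variable {B : Type*} [NormedRing B] [StarRing B] [CStarRing B] [NormedAlgebra ℂ B]
  [CompleteSpace B] [StarModule ℂ B]
variable {D : Type*} [NormedRing D] [StarRing D] [CStarRing D] [NormedAlgebra ℂ D]
  [CompleteSpace D] [StarModule ℂ D]
variable {X : Type*} [NormedAddCommGroup X] [NormedSpace ℂ X]
variable {Y : Type*} [NormedAddCommGroup Y] [NormedSpace ℂ Y] [CompleteSpace Y]
variable {X₂ : Type*} [NormedAddCommGroup X₂] [NormedSpace ℂ X₂]
variable {Y₂ : Type*} [NormedAddCommGroup Y₂] [NormedSpace ℂ Y₂] [CompleteSpace Y₂]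

/-- if `(X, Y)` and `(Z, W)` are equivalent pairs implementing the strong
Morita equivalence of `A ⊆ C` and `B ⊆ D` — i.e. there is a `C`–`D`-equivalence bimodule
isomorphism `Φ : Y → W` with `Φ(X) = Z` — then the induced isometric isomorphisms
coincide: `f_{(X,Y)} = f_{(Z,W)}`.  Each `f` is characterized by
`⟨x·f(φ)(d), z⟩_A = φ(⟨x·d, z⟩_C)`. -/
theorem stmt19 (M₁ : MoritaPair A C B D X Y) (M₂ : MoritaPair A C B D X₂ Y₂)
    (hA : M₁.ιA = M₂.ιA) (hB : M₁.ιB = M₂.ιB)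
    (Φ : Y ≃ₗ[ℂ] Y₂)
    (hΦlC : ∀ (c : C) (y : Y), Φ (M₁.lC c y) = M₂.lC c (Φ y))
    (hΦrD : ∀ (y : Y) (d : D), Φ (M₁.rD y d) = M₂.rD (Φ y) d)
    (hΦinnC : ∀ y z : Y, M₂.innC (Φ y) (Φ z) = M₁.innC y z)
    (hΦinnD : ∀ y z : Y, M₂.innD (Φ y) (Φ z) = M₁.innD y z)
    (hΦX : Φ '' Set.range M₁.incl = Set.range M₂.incl)
    (φ : C →L[ℂ] A)
    (hφ : ∀ (a : A) (c : C), φ (M₁.ιA a * c) = a * φ c ∧ φ (c * M₁.ιA a) = φ c * a)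
    (ψ₁ ψ₂ : D →ₗ[ℂ] B)
    (hψ₁ : ∀ (d : D) (x z : X),
      M₁.innA (M₁.rB x (ψ₁ d)) z = φ (M₁.innC (M₁.rD (M₁.incl x) d) (M₁.incl z)))
    (hψ₂ : ∀ (d : D) (x z : X₂),
      M₂.innA (M₂.rB x (ψ₂ d)) z = φ (M₂.innC (M₂.rD (M₂.incl x) d) (M₂.incl z))) :
    ψ₁ = ψ₂ := by
  ext d
  set b₁ := ψ₁ d with hb₁
  set b₂ := ψ₂ d with hb₂
  have hιBinj : Function.Injective M₂.ιB := M₂.ιB_isometry.injective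
  -- innC subtraction and zero lemmas for M₂
  have hinnC0 : ∀ w : Y₂, M₂.innC 0 w = 0 := by
    intro w
    have h := M₂.innC_add_left 0 0 w
    simpa using h
  have hinnCsub : ∀ u v w : Y₂, M₂.innC (u - v) w = M₂.innC u w - M₂.innC v w := by
    intro u v w
    have h := M₂.innC_add_left (u - v) v w
    rw [sub_add_cancel] at h
    exact eq_sub_of_add_eq h.symm
  -- key equality
  have hpre : ∀ x : X₂, ∃ x' : X, Φ (M₁.incl x') = M₂.incl x := by
    intro x
    have hx : M₂.incl x ∈ Set.range M₂.incl := ⟨x, rfl⟩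
    rw [← hΦX] at hx
    obtain ⟨y, ⟨x', rfl⟩, hy⟩ := hx
    exact ⟨x', hy⟩
  have key : ∀ x z : X₂,
      M₂.innC (M₂.rD (M₂.incl x) (M₂.ιB b₁)) (M₂.incl z)
        = M₂.innC (M₂.rD (M₂.incl x) (M₂.ιB b₂)) (M₂.incl z) := by
    intro x z
    obtain ⟨x', hx'⟩ := hpre x
    obtain ⟨z', hz'⟩ := hpre z
    have lhs : M₂.innC (M₂.rD (M₂.incl x) (M₂.ιB b₁)) (M₂.incl z)
        = M₂.ιA (φ (M₂.innC (M₂.rD (M₂.incl x) d) (M₂.incl z))) := by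
      rw [← hx', ← hz', ← hΦrD, ← hΦrD, hΦinnC, hΦinnC, ← hB, ← hA,
        ← M₁.rB_compat, ← M₁.innA_compat, hψ₁]
    have rhs : M₂.innC (M₂.rD (M₂.incl x) (M₂.ιB b₂)) (M₂.incl z)
        = M₂.ιA (φ (M₂.innC (M₂.rD (M₂.incl x) d) (M₂.incl z))) := by
      rw [← M₂.rB_compat, ← M₂.innA_compat, hψ₂]
    rw [lhs, rhs]
  -- rB agree
  have hrB : ∀ x : X₂, M₂.rB x b₁ = M₂.rB x b₂ := by
    intro x
    have hz : ∀ z : X₂,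
        M₂.innC (M₂.incl (M₂.rB x b₁ - M₂.rB x b₂)) (M₂.incl z) = 0 := by
      intro z
      rw [map_sub, hinnCsub, M₂.rB_compat, M₂.rB_compat, key x z, sub_self]
    have h0 := hz (M₂.rB x b₁ - M₂.rB x b₂)
    have hn : ‖M₂.incl (M₂.rB x b₁ - M₂.rB x b₂)‖ ^ 2 = 0 := by
      rw [← M₂.innC_norm, h0, norm_zero]
    have hn2 : ‖M₂.rB x b₁ - M₂.rB x b₂‖ = 0 := by
      rw [← M₂.incl_norm]
      exact pow_eq_zero_iff (n := 2) (by norm_num) |>.mp hn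
    have := norm_eq_zero.mp hn2
    exact sub_eq_zero.mp this
  -- multiplication identity
  have hmul : ∀ x z : X₂, M₂.innB x z * b₁ = M₂.innB x z * b₂ := by
    intro x z
    apply hιBinj
    have h1 : ∀ b : B, M₂.ιB (M₂.innB x z * b) = M₂.ιB (M₂.innB x (M₂.rB z b)) := by
      intro b
      rw [map_mul, M₂.innB_compat, M₂.innB_compat, M₂.rB_compat, M₂.innD_rD]
    rw [h1 b₁, h1 b₂, hrB z]
  -- conclude via fullness
  set g : B →L[ℂ] B := (ContinuousLinearMap.mul ℂ B).flip (b₁ - b₂) with hg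
  have hSker : Submodule.span ℂ {b : B | ∃ x z, M₂.innB x z = b}
      ≤ LinearMap.ker (g : B →ₗ[ℂ] B) := by
    rw [Submodule.span_le]
    rintro c ⟨x, z, rfl⟩
    have : M₂.innB x z * (b₁ - b₂) = 0 := by
      rw [mul_sub, hmul x z, sub_self]
    simpa [hg, LinearMap.mem_ker, mul_sub] using this
  have hclker : (Submodule.span ℂ {b : B | ∃ x z, M₂.innB x z = b}).topologicalClosure
      ≤ LinearMap.ker (g : B →ₗ[ℂ] B) :=
    Submodule.topologicalClosure_minimal _ hSker (ContinuousLinearMap.isClosed_ker g)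
  have hall : (1 : B) ∈ LinearMap.ker (g : B →ₗ[ℂ] B) := by
    apply hclker
    rw [M₂.innB_full]
    trivial
  have h1 : (1 : B) * (b₁ - b₂) = 0 := hall
  rw [one_mul, sub_eq_zero] at h1
  exact h1
end
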